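/- Let A and be p×q real matrices with rank(A) = r, and let B ∈ R^{p×r} and B̂ ∈ R^{p×r} be matrices whose columns are the top-r left singular vectors of A and Â respectively. Then there exists an r×r orthogonal matrix V such that ‖B − B̂V‖_F ≤ 2^{3/2} ‖Â − A‖_F / σ_r(A), where σ_r(A) is the r-th largest singular value of A, provided ‖Â − A‖_F < σ_r(A). -/

import Mathlib

open Matrix

/-- The Frobenius norm of a real matrix. -/
noncomputable def frobNorm {p q : ℕ} (M : Matrix (Fin p) (Fin q) ℝ) : ℝ :=
  Real.sqrt (∑ i, ∑ j, (M i j) ^ 2)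

namespace WedinAux

open Matrix

/-- adjoint identity for dot products -/
lemma dot_mulVec {m n : ℕ} (M : Matrix (Fin m) (Fin n) ℝ) (x : Fin m → ℝ) (y : Fin n → ℝ) :
    (M *ᵥ y) ⬝ᵥ x = y ⬝ᵥ (Mᵀ *ᵥ x) := by
  rw [dotProduct_comm, dotProduct_mulVec, ← mulVec_transpose, dotProduct_comm]

lemma dot_self_nonneg {n : ℕ} (v : Fin n → ℝ) : 0 ≤ v ⬝ᵥ v :=
  Finset.sum_nonneg fun i _ => mul_self_nonneg _

lemma frob_nonneg {p q : ℕ} (M : Matrix (Fin p) (Fin q) ℝ) : 0 ≤ frobNorm M :=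
  Real.sqrt_nonneg _

lemma frob_sq {p q : ℕ} (M : Matrix (Fin p) (Fin q) ℝ) :
    frobNorm M ^ 2 = Matrix.trace (Mᵀ * M) := by
  have h : (0:ℝ) ≤ ∑ i, ∑ j, (M i j) ^ 2 := by positivity
  rw [frobNorm, Real.sq_sqrt h, Matrix.trace]
  simp only [Matrix.diag, Matrix.mul_apply, Matrix.transpose_apply]
  rw [Finset.sum_comm]
  congr 1; ext i; congr 1; ext j; ring

lemma trace_transpose_mul_self_nonneg {p q : ℕ} (M : Matrix (Fin p) (Fin q) ℝ) :
    0 ≤ Matrix.trace (Mᵀ * M) := by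
  rw [← frob_sq]; positivity

lemma frob_eq_of_sq_eq {p q p' q' : ℕ} (M : Matrix (Fin p) (Fin q) ℝ)
    (N : Matrix (Fin p') (Fin q') ℝ) (h : Matrix.trace (Mᵀ * M) = Matrix.trace (Nᵀ * N)) :
    frobNorm M = frobNorm N := by
  have h1 := frob_sq M
  have h2 := frob_sq N
  nlinarith [frob_nonneg M, frob_nonneg N]

lemma frob_triangle {p q : ℕ} (X Y : Matrix (Fin p) (Fin q) ℝ) :
    frobNorm (X + Y) ≤ frobNorm X + frobNorm Y := by
  letI : NormedAddCommGroup (Matrix (Fin p) (Fin q) ℝ) := Matrix.frobeniusNormedAddCommGroup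
  have h : ∀ Z : Matrix (Fin p) (Fin q) ℝ, frobNorm Z = ‖Z‖ := by
    intro Z
    rw [Matrix.frobenius_norm_def, frobNorm, Real.sqrt_eq_rpow]
    norm_num [Real.norm_eq_abs, sq_abs]
  rw [h, h, h]
  exact norm_add_le X Y

lemma proj_contract {m n : ℕ} (B : Matrix (Fin m) (Fin n) ℝ) (hB : Bᵀ * B = 1)
    (v : Fin m → ℝ) : ((B * Bᵀ) *ᵥ v) ⬝ᵥ v ≤ v ⬝ᵥ v := by
  set w := Bᵀ *ᵥ v with hw
  have h1 : ((B * Bᵀ) *ᵥ v) ⬝ᵥ v = w ⬝ᵥ w := by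
    rw [← mulVec_mulVec, dot_mulVec, ← hw]
  set u := v - B *ᵥ w with hu
  have h2 : (B *ᵥ w) ⬝ᵥ v = w ⬝ᵥ w := by rw [dot_mulVec, ← hw]
  have h3 : (B *ᵥ w) ⬝ᵥ (B *ᵥ w) = w ⬝ᵥ w := by
    rw [dot_mulVec, mulVec_mulVec, hB, one_mulVec]
  have h4 : 0 ≤ u ⬝ᵥ u := dot_self_nonneg u
  have h5 : u ⬝ᵥ u = v ⬝ᵥ v - 2 * (w ⬝ᵥ w) + w ⬝ᵥ w := by
    rw [hu]
    rw [sub_dotProduct, dotProduct_sub, dotProduct_sub]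
    rw [dotProduct_comm v (B *ᵥ w)] at *
    rw [h2, h3]
    ring
  linarith [h1, h4, h5]

/-- real symmetric matrices are orthogonally diagonalizable -/
lemma exists_orthodiag {n : ℕ} (T : Matrix (Fin n) (Fin n) ℝ) (hT : Tᵀ = T) :
    ∃ (U : Matrix (Fin n) (Fin n) ℝ) (lam : Fin n → ℝ),
      Uᵀ * U = 1 ∧ U * Uᵀ = 1 ∧ T * U = U * Matrix.diagonal lam := by
  have hH : T.IsHermitian := by
    unfold Matrix.IsHermitian
    ext i j
    simpa [Matrix.conjTranspose_apply] using (congrFun (congrFun hT j) i).symm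
  set U : Matrix (Fin n) (Fin n) ℝ := (hH.eigenvectorUnitary : Matrix (Fin n) (Fin n) ℝ) with hU
  have hstar : star U = Uᵀ := by
    rw [Matrix.star_eq_conjTranspose]
    ext i j
    simp [Matrix.conjTranspose_apply]
  have h1 : Uᵀ * U = 1 := by
    rw [← hstar]; exact Unitary.coe_star_mul_self hH.eigenvectorUnitary
  have h2 : U * Uᵀ = 1 := by
    rw [← hstar]; exact Unitary.coe_mul_star_self hH.eigenvectorUnitary
  refine ⟨U, hH.eigenvalues, h1, h2, ?_⟩
  have hst := hH.spectral_theorem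
  have hdiag : Matrix.diagonal (RCLike.ofReal ∘ hH.eigenvalues) =
      Matrix.diagonal hH.eigenvalues := by
    congr 1
  rw [hdiag, Unitary.conjStarAlgAut_apply, ← hU] at hst
  have hkey : T * U = U * Matrix.diagonal hH.eigenvalues * (star U * U) := by
    rw [← Matrix.mul_assoc, ← hst]
  rw [hkey, hstar, h1, Matrix.mul_one]

lemma eig_col {n : ℕ} {T U : Matrix (Fin n) (Fin n) ℝ} {lam : Fin n → ℝ}
    (h : T * U = U * Matrix.diagonal lam) (k : Fin n) :
    T *ᵥ (fun i => U i k) = lam k • (fun i => U i k) := by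
  funext i
  have h1 : (T *ᵥ fun i => U i k) i = (T * U) i k := by
    simp [Matrix.mul_apply, mulVec, dotProduct]
  rw [h1, h, Matrix.mul_diagonal]
  simp [mul_comm]

lemma col_dot {n r : ℕ} {U : Matrix (Fin n) (Fin r) ℝ} (hU : Uᵀ * U = 1) (k l : Fin r) :
    (fun i => U i k) ⬝ᵥ (fun i => U i l) = if k = l then (1:ℝ) else 0 := by
  have := congrFun (congrFun hU k) l
  simp only [Matrix.mul_apply, Matrix.transpose_apply, Matrix.one_apply] at this
  simpa [dotProduct] using this

lemma quadform_le {n : ℕ} (T : Matrix (Fin n) (Fin n) ℝ) (hT : Tᵀ = T) (c : ℝ) (hc : 0 ≤ c)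
    (heig : ∀ (v : Fin n → ℝ) (μ : ℝ), T *ᵥ v = μ • v → v ≠ 0 → μ ≠ 0 → μ ≤ c)
    (x : Fin n → ℝ) : (T *ᵥ x) ⬝ᵥ x ≤ c * (x ⬝ᵥ x) := by
  obtain ⟨U, lam, hUtU, hUUt, hTU⟩ := exists_orthodiag T hT
  have hcolne : ∀ k, (fun i => U i k) ≠ 0 := by
    intro k hk
    have h := col_dot hUtU k k
    rw [hk] at h
    simp at h
  have hlam : ∀ k, lam k ≤ c := by
    intro k
    rcases eq_or_ne (lam k) 0 with h0 | h0
    · rw [h0]; exact hc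
    · exact heig _ _ (eig_col hTU k) (hcolne k) h0
  have hTeq : T = U * Matrix.diagonal lam * Uᵀ := by
    calc T = T * (U * Uᵀ) := by rw [hUUt, Matrix.mul_one]
      _ = T * U * Uᵀ := by rw [Matrix.mul_assoc]
      _ = U * Matrix.diagonal lam * Uᵀ := by rw [hTU]
  set y := Uᵀ *ᵥ x with hy
  have h1 : (T *ᵥ x) ⬝ᵥ x = (Matrix.diagonal lam *ᵥ y) ⬝ᵥ y := by
    rw [hTeq, ← Matrix.mulVec_mulVec, dot_mulVec, Matrix.transpose_mul,
      Matrix.diagonal_transpose, ← Matrix.mulVec_mulVec, ← hy, dotProduct_comm]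
  have h2 : y ⬝ᵥ y = x ⬝ᵥ x := by
    have h : y ⬝ᵥ y = x ⬝ᵥ ((U * Uᵀ) *ᵥ x) := by
      rw [hy, dot_mulVec, Matrix.transpose_transpose, Matrix.mulVec_mulVec]
    rw [h, hUUt, Matrix.one_mulVec]
  have h3 : (Matrix.diagonal lam *ᵥ y) ⬝ᵥ y = ∑ k, lam k * (y k * y k) := by
    simp [dotProduct, Matrix.mulVec_diagonal, mul_assoc]
  have h4 : ∑ k, lam k * (y k * y k) ≤ ∑ k, c * (y k * y k) :=
    Finset.sum_le_sum fun k _ => mul_le_mul_of_nonneg_right (hlam k) (mul_self_nonneg _)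
  have h5 : ∑ k, c * (y k * y k) = c * (y ⬝ᵥ y) := by
    rw [dotProduct, Finset.mul_sum]
  rw [h1, h3, ← h2, ← h5]
  exact h4

lemma procrustes {n : ℕ} (W : Matrix (Fin n) (Fin n) ℝ)
    (hW : ∀ x : Fin n → ℝ, (W *ᵥ x) ⬝ᵥ (W *ᵥ x) ≤ x ⬝ᵥ x) :
    ∃ V : Matrix (Fin n) (Fin n) ℝ, Vᵀ * V = 1 ∧ V * Vᵀ = 1 ∧
      Matrix.trace (Wᵀ * W) ≤ Matrix.trace (Vᵀ * W) := by
  classical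
  obtain ⟨P, lam, hPtP, hPPt, hGP⟩ := exists_orthodiag (Wᵀ * W)
      (by rw [Matrix.transpose_mul, Matrix.transpose_transpose])
  set cl : Fin n → (Fin n → ℝ) := fun k i => P i k with hcl
  have hcd : ∀ k l, cl k ⬝ᵥ cl l = if k = l then (1:ℝ) else 0 := fun k l => col_dot hPtP k l
  have hGc : ∀ k, (Wᵀ * W) *ᵥ cl k = lam k • cl k := fun k => eig_col hGP k
  have hWc : ∀ k l, (W *ᵥ cl k) ⬝ᵥ (W *ᵥ cl l) = lam l * (if k = l then (1:ℝ) else 0) := by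
    intro k l
    rw [dot_mulVec, Matrix.mulVec_mulVec, hGc l, dotProduct_smul, hcd k l]
    simp
  have hlam0 : ∀ k, 0 ≤ lam k := by
    intro k
    have h := hWc k k
    rw [if_pos rfl, mul_one] at h
    rw [← h]
    exact dot_self_nonneg _
  have hlam1 : ∀ k, lam k ≤ 1 := by
    intro k
    have h := hWc k k
    rw [if_pos rfl, mul_one] at h
    have h2 := hW (cl k)
    have h3 := hcd k k
    rw [if_pos rfl] at h3
    rw [h, h3] at h2
    exact h2
  set s : Set (Fin n) := {k | lam k ≠ 0} with hs
  set e : (Fin n → ℝ) ≃ EuclideanSpace ℝ (Fin n) := (WithLp.equiv 2 (Fin n → ℝ)).symm with he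
  set u : Fin n → EuclideanSpace ℝ (Fin n) :=
    fun k => (Real.sqrt (lam k))⁻¹ • e (W *ᵥ cl k) with hu
  have hue : ∀ k i, u k i = (Real.sqrt (lam k))⁻¹ * (W *ᵥ cl k) i := by
    intro k i; rfl
  have hinner : ∀ (x y : EuclideanSpace ℝ (Fin n)), (inner ℝ x y : ℝ) = ∑ i, x i * y i := by
    intro x y
    rw [PiLp.inner_apply]
    simp [RCLike.inner_apply, mul_comm]
  have horth : Orthonormal ℝ (s.restrict u) := by
    rw [orthonormal_iff_ite]
    rintro ⟨k, hk⟩ ⟨l, hl⟩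
    change inner ℝ (u k) (u l) = _
    rw [hinner]
    have hsum : ∑ i, u k i * u l i =
        (Real.sqrt (lam k))⁻¹ * (Real.sqrt (lam l))⁻¹ * ((W *ᵥ cl k) ⬝ᵥ (W *ᵥ cl l)) := by
      rw [dotProduct, Finset.mul_sum]
      refine Finset.sum_congr rfl fun i _ => ?_
      rw [hue, hue]; ring
    rw [hsum, hWc k l]
    rcases eq_or_ne k l with hkl | hkl
    · subst hkl
      rw [if_pos rfl, if_pos rfl, mul_one]
      have hpos : 0 < lam k := lt_of_le_of_ne (hlam0 k) (Ne.symm hk)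
      have hsq : Real.sqrt (lam k) * Real.sqrt (lam k) = lam k := Real.mul_self_sqrt (hlam0 k)
      have hne : Real.sqrt (lam k) ≠ 0 := by positivity
      field_simp
      rw [Real.sq_sqrt (hlam0 k)]
    · rw [if_neg hkl, if_neg (by simpa [Subtype.mk_eq_mk] using hkl), mul_zero, mul_zero]
  obtain ⟨b, hb⟩ := horth.exists_orthonormalBasis_extension_of_card_eq
    (by simp [finrank_euclideanSpace])
  have hWcol : ∀ k, W *ᵥ cl k = fun i => Real.sqrt (lam k) * b k i := by
    intro k
    by_cases hk : lam k ∈ ({0} : Set ℝ)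
    · have hk0 : lam k = 0 := hk
      have h := hWc k k
      rw [if_pos rfl, mul_one, hk0] at h
      have hz : W *ᵥ cl k = 0 := dotProduct_self_eq_zero.mp h
      funext i
      rw [hz]
      simp [hk0]
    · have hk0 : lam k ≠ 0 := hk
      have hbk : b k = u k := hb k hk0
      funext i
      rw [hbk, hue]
      have hne : Real.sqrt (lam k) ≠ 0 :=
        Real.sqrt_ne_zero'.mpr (lt_of_le_of_ne (hlam0 k) (Ne.symm hk0))
      field_simp
  set U : Matrix (Fin n) (Fin n) ℝ := fun i k => b k i with hUdef
  have hUtU : Uᵀ * U = 1 := by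
    ext k l
    have h2 := orthonormal_iff_ite.mp b.orthonormal k l
    rw [hinner] at h2
    simpa [Matrix.mul_apply, Matrix.one_apply] using h2
  have hUUt : U * Uᵀ = 1 := mul_eq_one_comm.mp hUtU
  have hWP : W * P = U * Matrix.diagonal (fun k => Real.sqrt (lam k)) := by
    ext i k
    have h1 : (W * P) i k = (W *ᵥ cl k) i := by
      simp [Matrix.mul_apply, mulVec, dotProduct, hcl]
    rw [h1, hWcol k, Matrix.mul_diagonal]
    exact mul_comm _ _
  refine ⟨U * Pᵀ, ?_, ?_, ?_⟩
  · rw [Matrix.transpose_mul, Matrix.transpose_transpose, Matrix.mul_assoc,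
      ← Matrix.mul_assoc Uᵀ U, hUtU, Matrix.one_mul, hPPt]
  · rw [Matrix.transpose_mul, Matrix.transpose_transpose, Matrix.mul_assoc,
      ← Matrix.mul_assoc Pᵀ P, hPtP, Matrix.one_mul, hUUt]
  · have hWeq : W = U * Matrix.diagonal (fun k => Real.sqrt (lam k)) * Pᵀ := by
      calc W = W * (P * Pᵀ) := by rw [hPPt, Matrix.mul_one]
        _ = (W * P) * Pᵀ := by rw [Matrix.mul_assoc]
        _ = _ := by rw [hWP]
    have htr1 : Matrix.trace (Wᵀ * W) = ∑ k, lam k := by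
      have h : Wᵀ * W = P * Matrix.diagonal lam * Pᵀ := by
        calc Wᵀ * W = (Wᵀ * W) * (P * Pᵀ) := by rw [hPPt, Matrix.mul_one]
          _ = ((Wᵀ * W) * P) * Pᵀ := (Matrix.mul_assoc _ _ _).symm
          _ = _ := by rw [hGP]
      rw [h, Matrix.trace_mul_cycle, hPtP, Matrix.one_mul, Matrix.trace_diagonal]
    have htr2 : Matrix.trace ((U * Pᵀ)ᵀ * W) = ∑ k, Real.sqrt (lam k) := by
      have h : (U * Pᵀ)ᵀ * W = P * (Matrix.diagonal (fun k => Real.sqrt (lam k)) * Pᵀ) := by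
        rw [Matrix.transpose_mul, Matrix.transpose_transpose, hWeq]
        rw [Matrix.mul_assoc U, Matrix.mul_assoc P, ← Matrix.mul_assoc Uᵀ U, hUtU,
          Matrix.one_mul]
      rw [h, ← Matrix.mul_assoc, Matrix.trace_mul_cycle, hPtP, Matrix.one_mul,
        Matrix.trace_diagonal]
    rw [htr1, htr2]
    refine Finset.sum_le_sum fun k _ => ?_
    have h0 := hlam0 k
    have h1 := hlam1 k
    have ht1 : Real.sqrt (lam k) ≤ 1 := by
      rw [show (1:ℝ) = Real.sqrt 1 by simp]
      exact Real.sqrt_le_sqrt h1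
    have ht0 := Real.sqrt_nonneg (lam k)
    have hsq : Real.sqrt (lam k) * Real.sqrt (lam k) = lam k := Real.mul_self_sqrt h0
    nlinarith

lemma col_space {p q r : ℕ} (A : Matrix (Fin p) (Fin q) ℝ) (B : Matrix (Fin p) (Fin r) ℝ)
    (hrank : A.rank = r) (hB : Bᵀ * B = 1) (d : Fin r → ℝ) (hd : ∀ i, 0 < d i)
    (hAB : A * Aᵀ * B = B * Matrix.diagonal d) : A = B * (Bᵀ * A) := by
  classical
  have hdd : Matrix.diagonal d * Matrix.diagonal (fun i => (d i)⁻¹) = 1 := by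
    rw [Matrix.diagonal_mul_diagonal]
    rw [show (fun i => d i * (d i)⁻¹) = fun _ => (1:ℝ) from
      funext fun i => mul_inv_cancel₀ (hd i).ne']
    exact Matrix.diagonal_one
  have hBeq : B = A * (Aᵀ * (B * Matrix.diagonal fun i => (d i)⁻¹)) := by
    calc B = B * (Matrix.diagonal d * Matrix.diagonal fun i => (d i)⁻¹) := by
          rw [hdd, Matrix.mul_one]
      _ = (B * Matrix.diagonal d) * Matrix.diagonal (fun i => (d i)⁻¹) :=
          (Matrix.mul_assoc _ _ _).symm
      _ = (A * Aᵀ * B) * Matrix.diagonal (fun i => (d i)⁻¹) := by rw [hAB]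
      _ = A * (Aᵀ * (B * Matrix.diagonal fun i => (d i)⁻¹)) := by
          simp only [Matrix.mul_assoc]
  have hrB : LinearMap.range B.mulVecLin ≤ LinearMap.range A.mulVecLin := by
    rw [hBeq, Matrix.mulVecLin_mul]
    exact LinearMap.range_comp_le_range _ _
  have hinj : Function.Injective B.mulVecLin := by
    rw [← LinearMap.ker_eq_bot, LinearMap.ker_eq_bot']
    intro v hv
    rw [Matrix.mulVecLin_apply] at hv
    have h1 : v = (Bᵀ * B) *ᵥ v := by rw [hB, Matrix.one_mulVec]
    rw [← Matrix.mulVec_mulVec, hv, Matrix.mulVec_zero] at h1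
    exact h1
  have hfrB : Module.finrank ℝ (LinearMap.range B.mulVecLin) = r := by
    rw [LinearMap.finrank_range_of_inj hinj, Module.finrank_fin_fun]
  have hfrA : Module.finrank ℝ (LinearMap.range A.mulVecLin) = r := hrank
  have heq : LinearMap.range B.mulVecLin = LinearMap.range A.mulVecLin :=
    Submodule.eq_of_le_of_finrank_le hrB (le_of_eq (by rw [hfrA, hfrB]))
  have hcols : ∀ j, ∃ c : Fin r → ℝ, B *ᵥ c = A *ᵥ Pi.single j 1 := by
    intro j
    have hmem : A *ᵥ Pi.single j 1 ∈ LinearMap.range A.mulVecLin :=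
      ⟨Pi.single j 1, by rw [Matrix.mulVecLin_apply]⟩
    rw [← heq] at hmem
    obtain ⟨c, hc⟩ := hmem
    exact ⟨c, by rw [← Matrix.mulVecLin_apply]; exact hc⟩
  choose C hC using hcols
  have hACB : A = B * (Matrix.of fun i j => C j i) := by
    ext i j
    have h := congrFun (hC j) i
    simp only [mulVec, dotProduct, Pi.single_apply, mul_ite, mul_one, mul_zero,
      Finset.sum_ite_eq', Finset.mem_univ, if_true] at h
    rw [Matrix.mul_apply]
    rw [← h]
    rfl
  calc A = B * (Matrix.of fun i j => C j i) := hACB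
    _ = B * ((Bᵀ * B) * (Matrix.of fun i j => C j i)) := by rw [hB, Matrix.one_mul]
    _ = B * (Bᵀ * (B * (Matrix.of fun i j => C j i))) := by rw [Matrix.mul_assoc]
    _ = B * (Bᵀ * A) := by rw [← hACB]

lemma le_of_sq_le_sq {a b : ℝ} (ha : 0 ≤ a) (hb : 0 ≤ b) (h : a ^ 2 ≤ b ^ 2) : a ≤ b := by
  nlinarith

lemma frob_sub_comm {p q : ℕ} (X Y : Matrix (Fin p) (Fin q) ℝ) :
    frobNorm (X - Y) = frobNorm (Y - X) := by
  unfold frobNorm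
  congr 1
  refine Finset.sum_congr rfl fun i _ => Finset.sum_congr rfl fun j _ => ?_
  rw [Matrix.sub_apply, Matrix.sub_apply]
  ring

lemma two_ip_le {a b : ℕ} (X Y : Matrix (Fin a) (Fin b) ℝ) :
    2 * Matrix.trace (Xᵀ * Y) ≤ Matrix.trace (Xᵀ * X) + Matrix.trace (Yᵀ * Y) := by
  have h := trace_transpose_mul_self_nonneg (X - Y)
  rw [Matrix.transpose_sub, Matrix.sub_mul, Matrix.mul_sub, Matrix.mul_sub] at h
  rw [Matrix.trace_sub, Matrix.trace_sub, Matrix.trace_sub] at h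
  have hsymm : Matrix.trace (Yᵀ * X) = Matrix.trace (Xᵀ * Y) := by
    rw [← Matrix.trace_transpose (Yᵀ * X), Matrix.transpose_mul, Matrix.transpose_transpose]
  linarith
  
lemma diag_transpose_mul_nonneg {a b : ℕ} (M : Matrix (Fin a) (Fin b) ℝ) (j : Fin b) :
    0 ≤ (Mᵀ * M) j j := by
  rw [Matrix.mul_apply]
  exact Finset.sum_nonneg fun i _ => mul_self_nonneg _

lemma trace_mul_diag {a : ℕ} (N : Matrix (Fin a) (Fin a) ℝ) (f : Fin a → ℝ) :
    Matrix.trace (N * Matrix.diagonal f) = ∑ j, N j j * f j := by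
  simp [Matrix.trace, Matrix.diag, Matrix.mul_diagonal]

lemma trace_conj {p r : ℕ} (B : Matrix (Fin p) (Fin r) ℝ) (M : Matrix (Fin p) (Fin p) ℝ) :
    Matrix.trace (Bᵀ * M * B) = ∑ j, (M *ᵥ (fun i => B i j)) ⬝ᵥ (fun i => B i j) := by
  simp only [Matrix.trace, Matrix.diag, Matrix.mul_apply, Matrix.transpose_apply,
    dotProduct, mulVec, Finset.sum_mul, Finset.mul_sum]
  congr 1; ext j
  rw [Finset.sum_comm]
  congr 1; ext i
  congr 1; ext k
  ring

end WedinAux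

open WedinAux

set_option maxHeartbeats 1600000 in
/-- A Davis–Kahan / Wedin sin-theta bound (Yu–Wang–Samworth form) for singular subspaces:
`A` has rank `r` with top-`r` left singular vectors the columns of `B` (orthonormal
eigenvectors of `AAᵀ` for its `r` positive eigenvalues `d`), `B̂` collects top-`r` left
singular vectors of `Â` (orthonormal eigenvectors of `ÂÂᵀ` for eigenvalues `d̂`, every other
eigenvalue of `ÂÂᵀ` being no larger), and `‖Â − A‖_F < σ_r(A) = √(min d)`. Then there is an
`r × r` orthogonal matrix `V` with `‖B − B̂V‖_F ≤ 2^{3/2} ‖Â − A‖_F / σ_r(A)`. -/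
theorem wedin_sin_theta
    (p q r : ℕ) (hr : 0 < r)
    (A Ahat : Matrix (Fin p) (Fin q) ℝ)
    (hrank : A.rank = r)
    (B Bhat : Matrix (Fin p) (Fin r) ℝ)
    (hB : Bᵀ * B = 1) (hBhat : Bhatᵀ * Bhat = 1)
    (d dhat : Fin r → ℝ)
    (hd : ∀ i, 0 < d i)
    (hAB : A * Aᵀ * B = B * Matrix.diagonal d)
    (hABhat : Ahat * Ahatᵀ * Bhat = Bhat * Matrix.diagonal dhat)
    (htop : ∀ (v : Fin p → ℝ) (μ : ℝ), (Ahat * Ahatᵀ).mulVec v = μ • v →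
      Bhatᵀ.mulVec v = 0 → v ≠ 0 → μ ≤ ⨅ i, dhat i)
    (hgap : frobNorm (Ahat - A) < Real.sqrt (⨅ i, d i)) :
    ∃ V : Matrix (Fin r) (Fin r) ℝ, Vᵀ * V = 1 ∧ V * Vᵀ = 1 ∧
      frobNorm (B - Bhat * V) ≤
        2 ^ ((3 : ℝ) / 2) * frobNorm (Ahat - A) / Real.sqrt (⨅ i, d i) := by
  classical
  haveI hne : Nonempty (Fin r) := ⟨⟨0, hr⟩⟩
  set ε := frobNorm (Ahat - A) with hεdef
  set δ := (⨅ i, d i : ℝ) with hδdef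
  set mh := (⨅ i, dhat i : ℝ) with hmhdef
  have hεnn : 0 ≤ ε := frob_nonneg _
  have hδpos : 0 < δ := by
    obtain ⟨i, hi⟩ := exists_eq_ciInf_of_finite (f := d)
    rw [hδdef, ← hi]
    exact hd i
  have hδle : ∀ i, δ ≤ d i := fun i => by
    rw [hδdef]; exact ciInf_le (Set.Finite.bddBelow (Set.finite_range d)) i
  have hdiagBhat : Bhatᵀ * (Ahat * Ahatᵀ * Bhat) = Matrix.diagonal dhat := by
    rw [hABhat, ← Matrix.mul_assoc, hBhat, Matrix.one_mul]
  have hdiagB : Bᵀ * (A * Aᵀ * B) = Matrix.diagonal d := by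
    rw [hAB, ← Matrix.mul_assoc, hB, Matrix.one_mul]
  have hdiagBhat' : Bhatᵀ * (Ahat * (Ahatᵀ * Bhat)) = Matrix.diagonal dhat := by
    rw [← Matrix.mul_assoc Ahat Ahatᵀ Bhat]; exact hdiagBhat
  have hdiagB' : Bᵀ * (A * (Aᵀ * B)) = Matrix.diagonal d := by
    rw [← Matrix.mul_assoc A Aᵀ B]; exact hdiagB
  have hdhat0 : ∀ i, 0 ≤ dhat i := by
    intro i
    have h5 : (Ahatᵀ * Bhat)ᵀ * (Ahatᵀ * Bhat) = Matrix.diagonal dhat := by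
      rw [Matrix.transpose_mul, Matrix.transpose_transpose, ← hdiagBhat]
      simp only [Matrix.mul_assoc]
    have h6 : Matrix.diagonal dhat i i = dhat i := by simp
    rw [← h6, ← h5]
    exact diag_transpose_mul_nonneg _ i
  have hmh0 : (0:ℝ) ≤ mh := by rw [hmhdef]; exact le_ciInf hdhat0
  have hmhle : ∀ i, mh ≤ dhat i := fun i => by
    rw [hmhdef]; exact ciInf_le (Set.Finite.bddBelow (Set.finite_range dhat)) i
  set Q : Matrix (Fin p) (Fin p) ℝ := 1 - Bhat * Bhatᵀ with hQdef
  have hPm2 : (Bhat * Bhatᵀ) * (Bhat * Bhatᵀ) = Bhat * Bhatᵀ := by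
    rw [Matrix.mul_assoc, ← Matrix.mul_assoc Bhatᵀ Bhat Bhatᵀ, hBhat, Matrix.one_mul]
  have hQT : Qᵀ = Q := by
    rw [hQdef, Matrix.transpose_sub, Matrix.transpose_one, Matrix.transpose_mul,
      Matrix.transpose_transpose]
  have hQ2 : Q * Q = Q := by
    rw [hQdef, Matrix.sub_mul, Matrix.one_mul, Matrix.mul_sub, Matrix.mul_one, hPm2]
    abel
  have hBhatQ : Bhatᵀ * Q = 0 := by
    rw [hQdef, Matrix.mul_sub, Matrix.mul_one, ← Matrix.mul_assoc, hBhat, Matrix.one_mul,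
      sub_self]
  have hQBhat : Q * Bhat = 0 := by
    rw [hQdef, Matrix.sub_mul, Matrix.one_mul, Matrix.mul_assoc, hBhat, Matrix.mul_one,
      sub_self]
  have hShT : (Ahat * Ahatᵀ)ᵀ = Ahat * Ahatᵀ := by
    rw [Matrix.transpose_mul, Matrix.transpose_transpose]
  have hBhatSh : Bhatᵀ * (Ahat * Ahatᵀ) = Matrix.diagonal dhat * Bhatᵀ := by
    have h := congrArg Matrix.transpose hABhat
    simp only [Matrix.transpose_mul, Matrix.transpose_transpose,
      Matrix.diagonal_transpose] at h
    rw [← h]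
  have hPSh : (Bhat * Bhatᵀ) * (Ahat * Ahatᵀ) = Bhat * Matrix.diagonal dhat * Bhatᵀ := by
    rw [Matrix.mul_assoc, hBhatSh, ← Matrix.mul_assoc]
  have hShPm : (Ahat * Ahatᵀ) * (Bhat * Bhatᵀ) = Bhat * Matrix.diagonal dhat * Bhatᵀ := by
    rw [← Matrix.mul_assoc, hABhat]
  have hTsym : (Q * (Ahat * Ahatᵀ) * Q)ᵀ = Q * (Ahat * Ahatᵀ) * Q := by
    rw [Matrix.transpose_mul, Matrix.transpose_mul, hQT, hShT, ← Matrix.mul_assoc]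
  have hidQT : Q * (Q * (Ahat * Ahatᵀ) * Q) = Q * (Ahat * Ahatᵀ) * Q := by
    rw [Matrix.mul_assoc Q (Ahat * Ahatᵀ) Q, ← Matrix.mul_assoc Q Q, hQ2]
  have hidTQ : (Q * (Ahat * Ahatᵀ) * Q) * Q = Q * (Ahat * Ahatᵀ) * Q := by
    rw [Matrix.mul_assoc (Q * (Ahat * Ahatᵀ)) Q Q, hQ2]
  have hquad : ∀ x : Fin p → ℝ,
      ((Q * (Ahat * Ahatᵀ) * Q) *ᵥ x) ⬝ᵥ x ≤ mh * (x ⬝ᵥ x) := by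
    intro x
    refine quadform_le _ hTsym mh hmh0 ?_ x
    intro v μ hv hvne hμne
    have hQv : Q *ᵥ v = v := by
      have h1 : Q *ᵥ ((Q * (Ahat * Ahatᵀ) * Q) *ᵥ v) = (Q * (Ahat * Ahatᵀ) * Q) *ᵥ v := by
        rw [Matrix.mulVec_mulVec, hidQT]
      rw [hv, Matrix.mulVec_smul] at h1
      exact smul_right_injective (Fin p → ℝ) hμne h1
    have hBv : Bhatᵀ *ᵥ v = 0 := by
      rw [← hQv, Matrix.mulVec_mulVec, hBhatQ, Matrix.zero_mulVec]
    have hShv : (Ahat * Ahatᵀ) *ᵥ v = μ • v := by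
      have hsum : (Ahat * Ahatᵀ) *ᵥ v
          = ((Bhat * Bhatᵀ) * (Ahat * Ahatᵀ)) *ᵥ v + (Q * (Ahat * Ahatᵀ)) *ᵥ v := by
        rw [← Matrix.add_mulVec, ← Matrix.add_mul, hQdef, add_sub_cancel, Matrix.one_mul]
      have hterm1 : ((Bhat * Bhatᵀ) * (Ahat * Ahatᵀ)) *ᵥ v = 0 := by
        rw [hPSh, Matrix.mul_assoc, ← Matrix.mulVec_mulVec, ← Matrix.mulVec_mulVec, hBv,
          Matrix.mulVec_zero, Matrix.mulVec_zero]
      have hterm2 : (Q * (Ahat * Ahatᵀ)) *ᵥ v = μ • v := by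
        have h2 : (Q * (Ahat * Ahatᵀ)) *ᵥ v = (Q * (Ahat * Ahatᵀ)) *ᵥ (Q *ᵥ v) := by
          rw [hQv]
        rw [h2, Matrix.mulVec_mulVec, hv]
      rw [hsum, hterm1, hterm2, zero_add]
    exact htop v μ hShv hBv hvne
  have hquadQ : ∀ x : Fin p → ℝ, ((Q * (Ahat * Ahatᵀ) * Q) *ᵥ x) ⬝ᵥ x
      ≤ mh * ((Q *ᵥ x) ⬝ᵥ (Q *ᵥ x)) := by
    intro x
    have h1 : ((Q * (Ahat * Ahatᵀ) * Q) *ᵥ (Q *ᵥ x)) ⬝ᵥ (Q *ᵥ x)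
        = ((Q * (Ahat * Ahatᵀ) * Q) *ᵥ x) ⬝ᵥ x := by
      rw [Matrix.mulVec_mulVec, hidTQ, dot_mulVec, hTsym, Matrix.mulVec_mulVec,
        hidTQ, dotProduct_comm]
    rw [← h1]
    exact hquad (Q *ᵥ x)
  have hQSh : Q * (Ahat * Ahatᵀ) = Q * (Ahat * Ahatᵀ) * Q := by
    calc Q * (Ahat * Ahatᵀ)
        = Q * (Ahat * Ahatᵀ) * (Bhat * Bhatᵀ + Q) := by
          rw [hQdef, add_sub_cancel, Matrix.mul_one]
      _ = Q * (Ahat * Ahatᵀ) * (Bhat * Bhatᵀ) + Q * (Ahat * Ahatᵀ) * Q := by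
          rw [Matrix.mul_add]
      _ = Q * (Ahat * Ahatᵀ) * Q := by
          rw [Matrix.mul_assoc Q (Ahat * Ahatᵀ) (Bhat * Bhatᵀ), hShPm,
            ← Matrix.mul_assoc Q (Bhat * Matrix.diagonal dhat) Bhatᵀ,
            ← Matrix.mul_assoc Q Bhat (Matrix.diagonal dhat), hQBhat,
            Matrix.zero_mul, Matrix.zero_mul, zero_add]
  have hdecomp : Ahat * Ahatᵀ
      = Bhat * Matrix.diagonal dhat * Bhatᵀ + Q * (Ahat * Ahatᵀ) * Q := by
    calc Ahat * Ahatᵀ = (Bhat * Bhatᵀ + Q) * (Ahat * Ahatᵀ) := by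
          rw [hQdef, add_sub_cancel, Matrix.one_mul]
      _ = (Bhat * Bhatᵀ) * (Ahat * Ahatᵀ) + Q * (Ahat * Ahatᵀ) := Matrix.add_mul _ _ _
      _ = Bhat * Matrix.diagonal dhat * Bhatᵀ + Q * (Ahat * Ahatᵀ) * Q :=
          congrArg₂ (· + ·) hPSh hQSh
  have htr_BQB : Matrix.trace (Bᵀ * Q * B)
      = (r : ℝ) - Matrix.trace ((Bhatᵀ * B)ᵀ * (Bhatᵀ * B)) := by
    have h1 : Bᵀ * Q * B = Bᵀ * B - (Bhatᵀ * B)ᵀ * (Bhatᵀ * B) := by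
      rw [hQdef, Matrix.mul_sub, Matrix.mul_one, Matrix.sub_mul]
      congr 1
      rw [Matrix.transpose_mul, Matrix.transpose_transpose]
      simp only [Matrix.mul_assoc]
    rw [h1, Matrix.trace_sub, hB, Matrix.trace_one]
    simp [Fintype.card_fin]
  have hfrobQB : frobNorm (Q * B) ^ 2 = Matrix.trace (Bᵀ * Q * B) := by
    rw [frob_sq]
    congr 1
    rw [Matrix.transpose_mul, hQT, Matrix.mul_assoc, ← Matrix.mul_assoc Q Q B, hQ2,
      ← Matrix.mul_assoc]
  have h7 : Matrix.trace (Bᵀ * (Ahat * Ahatᵀ) * B) ≤ ∑ i, dhat i := by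
    have hsplit : Matrix.trace (Bᵀ * (Ahat * Ahatᵀ) * B)
        = Matrix.trace (Bᵀ * (Bhat * Matrix.diagonal dhat * Bhatᵀ) * B)
          + Matrix.trace (Bᵀ * (Q * (Ahat * Ahatᵀ) * Q) * B) := by
      conv_lhs => rw [hdecomp]
      rw [Matrix.mul_add, Matrix.add_mul, Matrix.trace_add]
    have hterm1 : Matrix.trace (Bᵀ * (Bhat * Matrix.diagonal dhat * Bhatᵀ) * B)
        = ∑ j, ((Bhatᵀ * B) * (Bhatᵀ * B)ᵀ) j j * dhat j := by
      have e1 : Bᵀ * (Bhat * Matrix.diagonal dhat * Bhatᵀ) * B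
          = (Bhatᵀ * B)ᵀ * Matrix.diagonal dhat * (Bhatᵀ * B) := by
        rw [Matrix.transpose_mul, Matrix.transpose_transpose]
        simp only [Matrix.mul_assoc]
      rw [e1, Matrix.trace_mul_cycle, ← trace_mul_diag]
    have hterm2 : Matrix.trace (Bᵀ * (Q * (Ahat * Ahatᵀ) * Q) * B)
        ≤ mh * Matrix.trace (Bᵀ * Q * B) := by
      rw [trace_conj B (Q * (Ahat * Ahatᵀ) * Q), trace_conj B Q, Finset.mul_sum]
      refine Finset.sum_le_sum fun j _ => ?_
      have hq := hquadQ (fun i => B i j)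
      have hqq : (Q *ᵥ (fun i => B i j)) ⬝ᵥ (Q *ᵥ (fun i => B i j))
          = (Q *ᵥ (fun i => B i j)) ⬝ᵥ (fun i => B i j) := by
        conv_lhs => rw [dot_mulVec]
        rw [hQT, Matrix.mulVec_mulVec, hQ2, dotProduct_comm]
      rw [← hqq]
      exact hq
    have hc1 : ∀ j, ((Bhatᵀ * B) * (Bhatᵀ * B)ᵀ) j j ≤ 1 := by
      intro j
      have hrow : ∀ k, (Bhatᵀ * B) j k = (Bᵀ *ᵥ (fun i => Bhat i j)) k := by
        intro k
        rw [Matrix.mul_apply]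
        simp [mulVec, dotProduct, Matrix.transpose_apply, mul_comm]
      have hWW : ((Bhatᵀ * B) * (Bhatᵀ * B)ᵀ) j j
          = (Bᵀ *ᵥ (fun i => Bhat i j)) ⬝ᵥ (Bᵀ *ᵥ (fun i => Bhat i j)) := by
        rw [Matrix.mul_apply, dotProduct]
        refine Finset.sum_congr rfl fun k _ => ?_
        rw [Matrix.transpose_apply, hrow k]
      have hle : (Bᵀ *ᵥ (fun i => Bhat i j)) ⬝ᵥ (Bᵀ *ᵥ (fun i => Bhat i j))
          ≤ (fun i => Bhat i j) ⬝ᵥ (fun i => Bhat i j) := by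
        rw [dot_mulVec, Matrix.transpose_transpose, Matrix.mulVec_mulVec, dotProduct_comm]
        exact proj_contract B hB _
      have hone : (fun i => Bhat i j) ⬝ᵥ (fun i => Bhat i j) = 1 := by
        have h := col_dot hBhat j j
        rwa [if_pos rfl] at h
      rw [hWW, ← hone]
      exact hle
    have htrWW : Matrix.trace ((Bhatᵀ * B)ᵀ * (Bhatᵀ * B))
        = ∑ j, ((Bhatᵀ * B) * (Bhatᵀ * B)ᵀ) j j := by
      rw [Matrix.trace_mul_comm]
      simp [Matrix.trace, Matrix.diag]
    have hrsum : (r:ℝ) = ∑ _j : Fin r, (1:ℝ) := by simp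
    calc Matrix.trace (Bᵀ * (Ahat * Ahatᵀ) * B)
        = Matrix.trace (Bᵀ * (Bhat * Matrix.diagonal dhat * Bhatᵀ) * B)
          + Matrix.trace (Bᵀ * (Q * (Ahat * Ahatᵀ) * Q) * B) := hsplit
      _ ≤ (∑ j, ((Bhatᵀ * B) * (Bhatᵀ * B)ᵀ) j j * dhat j)
          + mh * Matrix.trace (Bᵀ * Q * B) := add_le_add (le_of_eq hterm1) hterm2
      _ = ∑ j, (((Bhatᵀ * B) * (Bhatᵀ * B)ᵀ) j j * dhat j
          + mh * (1 - ((Bhatᵀ * B) * (Bhatᵀ * B)ᵀ) j j)) := by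
          rw [htr_BQB, htrWW, hrsum, ← Finset.sum_sub_distrib, Finset.mul_sum,
            ← Finset.sum_add_distrib]
      _ ≤ ∑ j, dhat j := by
          refine Finset.sum_le_sum fun j _ => ?_
          nlinarith [hc1 j, hmhle j, hmh0]
  have hproj : A = B * (Bᵀ * A) := col_space A B hrank hB d hd hAB
  have hprojT : Aᵀ = Aᵀ * B * Bᵀ := by
    have h := congrArg Matrix.transpose hproj
    simp only [Matrix.transpose_mul, Matrix.transpose_transpose] at h
    exact h
  have htrA : Matrix.trace (Aᵀ * A) = ∑ i, d i := by
    calc Matrix.trace (Aᵀ * A) = Matrix.trace (A * Aᵀ) := Matrix.trace_mul_comm _ _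
      _ = Matrix.trace ((B * (Bᵀ * A)) * Aᵀ) := by rw [← hproj]
      _ = Matrix.trace ((Bᵀ * A * Aᵀ) * B) := by
          rw [Matrix.mul_assoc, Matrix.trace_mul_comm]
      _ = Matrix.trace (Bᵀ * (A * (Aᵀ * B))) := by simp only [Matrix.mul_assoc]
      _ = ∑ i, d i := by rw [hdiagB', Matrix.trace_diagonal]
  have hXY : Matrix.trace (Aᵀ * Ahat) = Matrix.trace ((Bᵀ * A)ᵀ * (Bᵀ * Ahat)) := by
    rw [Matrix.transpose_mul, Matrix.transpose_transpose,
      ← Matrix.mul_assoc (Aᵀ * B) Bᵀ Ahat, ← hprojT]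
  have hXX : Matrix.trace ((Bᵀ * A)ᵀ * (Bᵀ * A)) = Matrix.trace (Aᵀ * A) := by
    rw [Matrix.transpose_mul, Matrix.transpose_transpose,
      ← Matrix.mul_assoc (Aᵀ * B) Bᵀ A, ← hprojT]
  have hYY : Matrix.trace ((Bᵀ * Ahat)ᵀ * (Bᵀ * Ahat))
      = Matrix.trace (Bᵀ * (Ahat * Ahatᵀ) * B) := by
    rw [Matrix.transpose_mul, Matrix.transpose_transpose, Matrix.trace_mul_comm]
    simp only [Matrix.mul_assoc]
  have h10 : 2 * Matrix.trace (Aᵀ * Ahat) ≤ (∑ i, d i) + ∑ i, dhat i := by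
    have h := two_ip_le (Bᵀ * A) (Bᵀ * Ahat)
    rw [← hXY, hXX, hYY, htrA] at h
    linarith [h7]
  have h8 : frobNorm (Q * Ahat) ^ 2 = Matrix.trace (Ahatᵀ * Ahat) - ∑ i, dhat i := by
    rw [frob_sq]
    have e1 : (Q * Ahat)ᵀ * (Q * Ahat)
        = Ahatᵀ * Ahat - Ahatᵀ * (Bhat * (Bhatᵀ * Ahat)) := by
      rw [Matrix.transpose_mul, hQT, Matrix.mul_assoc, ← Matrix.mul_assoc Q Q Ahat, hQ2,
        hQdef, Matrix.sub_mul, Matrix.one_mul, Matrix.mul_sub]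
      congr 1
      simp only [Matrix.mul_assoc]
    rw [e1, Matrix.trace_sub]
    congr 1
    rw [← Matrix.mul_assoc, Matrix.trace_mul_comm]
    simp only [Matrix.mul_assoc]
    rw [hdiagBhat', Matrix.trace_diagonal]
  have h9 : ε ^ 2 = Matrix.trace (Ahatᵀ * Ahat) - 2 * Matrix.trace (Aᵀ * Ahat)
      + ∑ i, d i := by
    rw [hεdef, frob_sq, Matrix.transpose_sub, Matrix.sub_mul, Matrix.mul_sub,
      Matrix.mul_sub, Matrix.trace_sub, Matrix.trace_sub, Matrix.trace_sub]
    have h1 : Matrix.trace (Ahatᵀ * A) = Matrix.trace (Aᵀ * Ahat) := by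
      rw [← Matrix.trace_transpose (Ahatᵀ * A), Matrix.transpose_mul,
        Matrix.transpose_transpose]
    rw [h1, htrA]
    ring
  have h11 : frobNorm (Q * Ahat) ≤ ε :=
    le_of_sq_le_sq (frob_nonneg _) hεnn (by rw [h8, h9]; linarith [h10])
  have hQcontract : ∀ M : Matrix (Fin p) (Fin q) ℝ, frobNorm (Q * M) ≤ frobNorm M := by
    intro M
    apply le_of_sq_le_sq (frob_nonneg _) (frob_nonneg _)
    rw [frob_sq, frob_sq]
    have e1 : (Q * M)ᵀ * (Q * M) = Mᵀ * M - (Bhatᵀ * M)ᵀ * (Bhatᵀ * M) := by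
      rw [Matrix.transpose_mul, hQT, Matrix.mul_assoc, ← Matrix.mul_assoc Q Q M, hQ2,
        hQdef, Matrix.sub_mul, Matrix.one_mul, Matrix.mul_sub]
      congr 1
      rw [Matrix.transpose_mul, Matrix.transpose_transpose]
      simp only [Matrix.mul_assoc]
    rw [e1, Matrix.trace_sub]
    linarith [trace_transpose_mul_self_nonneg (Bhatᵀ * M)]
  have h12 : frobNorm (Q * (A - Ahat)) ≤ ε := by
    calc frobNorm (Q * (A - Ahat)) ≤ frobNorm (A - Ahat) := hQcontract _
      _ = ε := by rw [frob_sub_comm]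
  have h14 : frobNorm (Q * A) ≤ 2 * ε := by
    have hsplit : Q * A = Q * (A - Ahat) + Q * Ahat := by
      rw [Matrix.mul_sub, sub_add_cancel]
    rw [hsplit]
    calc frobNorm (Q * (A - Ahat) + Q * Ahat)
        ≤ frobNorm (Q * (A - Ahat)) + frobNorm (Q * Ahat) := frob_triangle _ _
      _ ≤ ε + ε := add_le_add h12 h11
      _ = 2 * ε := by ring
  have h13 : δ * frobNorm (Q * B) ^ 2 ≤ frobNorm (Q * A) ^ 2 := by
    have hQA : Q * A = (Q * B) * (Bᵀ * A) := by
      conv_lhs => rw [hproj]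
      rw [← Matrix.mul_assoc]
    rw [hQA, frob_sq ((Q * B) * (Bᵀ * A))]
    have e2 : (Bᵀ * A) * (Bᵀ * A)ᵀ = Matrix.diagonal d := by
      rw [Matrix.transpose_mul, Matrix.transpose_transpose, Matrix.mul_assoc]
      exact hdiagB'
    have e1 : ((Q * B) * (Bᵀ * A))ᵀ * ((Q * B) * (Bᵀ * A))
        = (Bᵀ * A)ᵀ * ((Q * B)ᵀ * (Q * B) * (Bᵀ * A)) := by
      rw [Matrix.transpose_mul]
      simp only [Matrix.mul_assoc]
    have e3 : Matrix.trace (((Q * B) * (Bᵀ * A))ᵀ * ((Q * B) * (Bᵀ * A)))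
        = Matrix.trace ((Q * B)ᵀ * (Q * B) * Matrix.diagonal d) := by
      rw [e1, Matrix.trace_mul_comm,
        Matrix.mul_assoc ((Q * B)ᵀ * (Q * B)) (Bᵀ * A) (Bᵀ * A)ᵀ, e2]
    rw [e3, trace_mul_diag]
    have hfq : frobNorm (Q * B) ^ 2 = ∑ j, ((Q * B)ᵀ * (Q * B)) j j := by
      rw [frob_sq]
      simp [Matrix.trace, Matrix.diag]
    rw [hfq, Finset.mul_sum]
    refine Finset.sum_le_sum fun j _ => ?_
    have h1 := diag_transpose_mul_nonneg (Q * B) j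
    have h2 := hδle j
    nlinarith
  have hWcon : ∀ x : Fin r → ℝ,
      ((Bhatᵀ * B) *ᵥ x) ⬝ᵥ ((Bhatᵀ * B) *ᵥ x) ≤ x ⬝ᵥ x := by
    intro x
    have h1 : (Bhatᵀ * B) *ᵥ x = Bhatᵀ *ᵥ (B *ᵥ x) := (Matrix.mulVec_mulVec _ _ _).symm
    rw [h1]
    have h2 : (Bhatᵀ *ᵥ (B *ᵥ x)) ⬝ᵥ (Bhatᵀ *ᵥ (B *ᵥ x))
        = ((Bhat * Bhatᵀ) *ᵥ (B *ᵥ x)) ⬝ᵥ (B *ᵥ x) := by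
      rw [dot_mulVec, Matrix.transpose_transpose, Matrix.mulVec_mulVec, dotProduct_comm]
    rw [h2]
    calc ((Bhat * Bhatᵀ) *ᵥ (B *ᵥ x)) ⬝ᵥ (B *ᵥ x) ≤ (B *ᵥ x) ⬝ᵥ (B *ᵥ x) :=
          proj_contract Bhat hBhat _
      _ = x ⬝ᵥ x := by
          rw [dot_mulVec, Matrix.mulVec_mulVec, hB, Matrix.one_mulVec]
  obtain ⟨V, hV1, hV2, hVtr⟩ := procrustes (Bhatᵀ * B) hWcon
  refine ⟨V, hV1, hV2, ?_⟩
  have hBV : frobNorm (B - Bhat * V) ^ 2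
      = 2 * (r:ℝ) - 2 * Matrix.trace (Vᵀ * (Bhatᵀ * B)) := by
    rw [frob_sq, Matrix.transpose_sub, Matrix.sub_mul, Matrix.mul_sub, Matrix.mul_sub,
      Matrix.trace_sub, Matrix.trace_sub, Matrix.trace_sub, hB, Matrix.trace_one]
    have e1 : Matrix.trace (Bᵀ * (Bhat * V)) = Matrix.trace (Vᵀ * (Bhatᵀ * B)) := by
      rw [← Matrix.trace_transpose (Bᵀ * (Bhat * V)), Matrix.transpose_mul,
        Matrix.transpose_mul, Matrix.transpose_transpose]
      simp only [Matrix.mul_assoc]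
    have e2 : Matrix.trace ((Bhat * V)ᵀ * B) = Matrix.trace (Vᵀ * (Bhatᵀ * B)) := by
      rw [Matrix.transpose_mul]
      simp only [Matrix.mul_assoc]
    have e3 : Matrix.trace ((Bhat * V)ᵀ * (Bhat * V)) = (r:ℝ) := by
      rw [Matrix.transpose_mul]
      have h : Vᵀ * Bhatᵀ * (Bhat * V) = Vᵀ * V := by
        rw [Matrix.mul_assoc, ← Matrix.mul_assoc Bhatᵀ Bhat V, hBhat, Matrix.one_mul]
      rw [h, hV1, Matrix.trace_one]
      simp
    rw [e1, e2, e3]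
    simp [Fintype.card_fin]
    ring
  have hQBfrob2 : frobNorm (Q * B) ^ 2
      = (r:ℝ) - Matrix.trace ((Bhatᵀ * B)ᵀ * (Bhatᵀ * B)) := by
    rw [hfrobQB, htr_BQB]
  have hBV2 : frobNorm (B - Bhat * V) ^ 2 ≤ 2 * frobNorm (Q * B) ^ 2 := by
    rw [hBV, hQBfrob2]
    linarith [hVtr]
  have hQA2 : frobNorm (Q * A) ^ 2 ≤ (2 * ε) ^ 2 := by
    nlinarith [frob_nonneg (Q * A), h14]
  have hQB2 : δ * frobNorm (Q * B) ^ 2 ≤ 4 * ε ^ 2 := by nlinarith [h13, hQA2]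
  have hpow : ((2:ℝ) ^ ((3:ℝ)/2)) ^ 2 = 8 := by
    rw [← Real.rpow_natCast ((2:ℝ) ^ ((3:ℝ)/2)) 2,
      ← Real.rpow_mul (by norm_num : (0:ℝ) ≤ 2)]
    norm_num
  apply le_of_sq_le_sq (frob_nonneg _)
    (div_nonneg (mul_nonneg (by positivity) hεnn) (Real.sqrt_nonneg _))
  have hRHS : (2 ^ ((3:ℝ)/2) * ε / Real.sqrt δ) ^ 2 = 8 * ε ^ 2 / δ := by
    rw [div_pow, mul_pow, hpow, Real.sq_sqrt hδpos.le]
  rw [hRHS, le_div_iff₀ hδpos]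
  nlinarith [mul_nonneg (sub_nonneg.mpr hBV2) hδpos.le, hQB2, hδpos]
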